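/- arXiv:2407.19723 — 2 statements merged into one kernel-verified Lean document; each statement's English description precedes it below -/
import Mathlib

section
/- If ψ : ℝ → ℂ² solves the free time-independent Lévy-Leblond equation with γ₊-eigenvalue E, then the function D₊ψ, given by (D₊ψ)(x) = −(1/β) γ₊ ψ″(x) + β γ₋ ψ(x), also solves the free time-independent Lévy-Leblond equation with the same γ₊-eigenvalue E. (The second derivative ψ″ exists because the eigenvalue equation forces ψ′(x) = (iEγ₊ + iβγ₋)ψ(x).) -/
open Matrix

noncomputable section

/-- The gamma matrix `γ¹ = [[1,0],[0,−1]]`. -/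
def γ1 : Matrix (Fin 2) (Fin 2) ℂ := !![1, 0; 0, -1]

/-- The gamma matrix `γ₊ = [[0,1],[0,0]]`. -/
def γp : Matrix (Fin 2) (Fin 2) ℂ := !![0, 1; 0, 0]

/-- The gamma matrix `γ₋ = [[0,0],[1,0]]`. -/
def γm : Matrix (Fin 2) (Fin 2) ℂ := !![0, 0; 1, 0]

/-- `ψ : ℝ → ℂ²` solves the free time-independent Lévy-Leblond equation
with `γ₊`-eigenvalue `E`: `ψ` is differentiable and
`β γ₋ ψ(x) − i γ¹ ψ′(x) = E γ₊ ψ(x)` for all `x`. -/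
def SolvesLL (β E : ℝ) (ψ : ℝ → (Fin 2 → ℂ)) : Prop :=
  Differentiable ℝ ψ ∧
    ∀ x : ℝ, (β : ℂ) • γm.mulVec (ψ x) - Complex.I • γ1.mulVec (deriv ψ x)
      = (E : ℂ) • γp.mulVec (ψ x)

/-- The operator `P̂`: `(P̂ψ)(x) = −i ψ′(x)`. -/
def Phat (ψ : ℝ → (Fin 2 → ℂ)) : ℝ → (Fin 2 → ℂ) :=
  fun x => (-Complex.I) • deriv ψ x

/-- The operator `D₊`: `(D₊ψ)(x) = −(1/β) γ₊ ψ″(x) + β γ₋ ψ(x)`. -/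
def Dplus (β : ℝ) (ψ : ℝ → (Fin 2 → ℂ)) : ℝ → (Fin 2 → ℂ) :=
  fun x => (-(1 / (β : ℂ))) • γp.mulVec (deriv (deriv ψ) x) + (β : ℂ) • γm.mulVec (ψ x)

/-- The operator `P¹`: `(P¹ψ)(x) = γ¹ ψ(−x)`. -/
def P1 (ψ : ℝ → (Fin 2 → ℂ)) : ℝ → (Fin 2 → ℂ) :=
  fun x => γ1.mulVec (ψ (-x))

/-! The Lévy-Leblond equation with `γ₊`-eigenvalue `E` is the first-order system `ψ' = i N ψ`
for `N = E γ₊ + β γ₋`, and `N² = Eβ`. Hence `ψ'' = -Eβ ψ`, which turns `D₊ψ` into `N ψ`; as `N`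
commutes with `i N`, the function `N ψ` solves the same system. -/

theorem HasDerivAt.matrix_mulVec {m n : Type*} [Fintype m] [Fintype n] (A : Matrix m n ℂ)
    {f : ℝ → n → ℂ} {f' : n → ℂ} {x : ℝ} (hf : HasDerivAt f f' x) :
    HasDerivAt (fun y => A *ᵥ f y) (A *ᵥ f') x :=
  (LinearMap.toContinuousLinearMap (A.mulVecLin.restrictScalars ℝ)).hasFDerivAt.comp_hasDerivAt
    x hf

theorem hasDerivAt_mulVec_of_commute {n : Type*} [Fintype n] {A B : Matrix n n ℂ}
    {ψ : ℝ → n → ℂ} (hψ : ∀ x, HasDerivAt ψ (A *ᵥ ψ x) x) (hAB : Commute A B) (x : ℝ) :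
    HasDerivAt (fun y => B *ᵥ ψ y) (A *ᵥ (B *ᵥ ψ x)) x := by
  simpa only [mulVec_mulVec, hAB.eq] using (hψ x).matrix_mulVec B

def llMatrix (β E : ℝ) : Matrix (Fin 2) (Fin 2) ℂ := (E : ℂ) • γp + (β : ℂ) • γm

theorem llMatrix_mul_self (β E : ℝ) :
    llMatrix β E * llMatrix β E = ((E : ℂ) * β) • (1 : Matrix (Fin 2) (Fin 2) ℂ) := by
  ext i j
  fin_cases i <;> fin_cases j <;> simp [llMatrix, γp, γm, mul_comm]

theorem llEquation_iff_eq_mulVec (β E : ℝ) (v w : Fin 2 → ℂ) :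
    (β : ℂ) • γm *ᵥ v - Complex.I • γ1 *ᵥ w = (E : ℂ) • γp *ᵥ v ↔
      w = (Complex.I • llMatrix β E) *ᵥ v := by
  simp only [funext_iff, Fin.forall_fin_two, Pi.sub_apply, Pi.smul_apply, smul_eq_mul, mulVec,
    dotProduct, Fin.sum_univ_two, llMatrix, γ1, γp, γm, Matrix.add_apply, Matrix.smul_apply,
    of_apply, cons_val', cons_val_zero, cons_val_one, cons_val_fin_one]
  constructor <;> rintro ⟨h0, h1⟩ <;> constructor
  · linear_combination Complex.I * h0 + w 0 * Complex.I_sq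
  · linear_combination -Complex.I * h1 + w 1 * Complex.I_sq
  · linear_combination -Complex.I * h0 - E * v 1 * Complex.I_sq
  · linear_combination Complex.I * h1 + β * v 0 * Complex.I_sq

theorem solvesLL_iff_hasDerivAt {β E : ℝ} {ψ : ℝ → Fin 2 → ℂ} :
    SolvesLL β E ψ ↔ ∀ x, HasDerivAt ψ ((Complex.I • llMatrix β E) *ᵥ ψ x) x := by
  refine ⟨fun ⟨hdiff, hψ⟩ x => ?_, fun hψ => ⟨fun x => (hψ x).differentiableAt, fun x => ?_⟩⟩
  · simpa only [(llEquation_iff_eq_mulVec β E _ _).1 (hψ x)] using (hdiff x).hasDerivAt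
  · exact (llEquation_iff_eq_mulVec β E _ _).2 (hψ x).deriv

theorem Dplus_eq_llMatrix_mulVec {β E : ℝ} (hβ : β ≠ 0) {ψ : ℝ → Fin 2 → ℂ}
    (hψ : SolvesLL β E ψ) : Dplus β ψ = fun x => llMatrix β E *ᵥ ψ x := by
  rw [solvesLL_iff_hasDerivAt] at hψ
  have hderiv : deriv ψ = fun x => (Complex.I • llMatrix β E) *ᵥ ψ x :=
    funext fun x => (hψ x).deriv
  have hderiv2 (x : ℝ) : deriv (deriv ψ) x = -((E : ℂ) * β) • ψ x := by
    rw [hderiv, (hasDerivAt_mulVec_of_commute hψ (Commute.refl _) x).deriv, mulVec_mulVec,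
      smul_mul_smul_comm, llMatrix_mul_self, Complex.I_mul_I, smul_smul, smul_mulVec, one_mulVec,
      neg_one_mul]
  have hβ' : (β : ℂ) ≠ 0 := by exact_mod_cast hβ
  funext x
  rw [Dplus, hderiv2, mulVec_smul, smul_smul, llMatrix, add_mulVec, smul_mulVec, smul_mulVec]
  congr 2
  field_simp

/-- If `ψ` solves the free time-independent Lévy-Leblond equation
with `γ₊`-eigenvalue `E`, then so does `D₊ψ`. -/
theorem solvesLL_Dplus (β : ℝ) (hβ : 0 < β) (E : ℝ)
    (ψ : ℝ → (Fin 2 → ℂ)) (hψ : SolvesLL β E ψ) :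
    SolvesLL β E (Dplus β ψ) := by
  rw [Dplus_eq_llMatrix_mulVec hβ.ne' hψ, solvesLL_iff_hasDerivAt]
  exact hasDerivAt_mulVec_of_commute (solvesLL_iff_hasDerivAt.1 hψ) ((Commute.refl _).smul_left _)

end
end

section
/- Let E > 0 and let φ₁, φ₂ : ℝ → ℂ² be twice-differentiable functions that are simultaneous eigenstates of P̂ and D₊ with eigenvalue √(Eβ), i.e. for j = 1, 2 and all x ∈ ℝ: −i φⱼ′(x) = √(Eβ) φⱼ(x) and (D₊φⱼ)(x) = √(Eβ) φⱼ(x). Then for all a, b ∈ ℂ, the function ψ(x) = a φ₁(x) + b γ¹ φ₂(−x) solves the free time-independent Lévy-Leblond equation with γ₊-eigenvalue E. (Reverse direction of the paper's theorem characterizing solutions via simultaneous eigenstates of the two square roots of the Schrödinger Hamiltonian.) -/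
open Matrix

noncomputable section

/-! The Lévy-Leblond equation is linear, and parity `P¹` is a symmetry of it because `γ¹`
squares to `1` and anticommutes with `γ₊` and `γ₋`. So it suffices that a simultaneous eigenstate
`φ` with eigenvalue `k`, `k² = Eβ`, is a solution: `P̂φ = kφ` gives `φ' = i k φ`, and the lower
component of `D₊φ = kφ`, where `γ₊ φ''` does not contribute, gives `β φ₀ = k φ₁`, hence
`k φ₀ = E φ₁`. -/

theorem Matrix.hasDerivAt_mulVec {n : Type*} [Fintype n] (A : Matrix n n ℂ) {f : ℝ → n → ℂ}
    {f' : n → ℂ} {x : ℝ} (hf : HasDerivAt f f' x) :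
    HasDerivAt (fun x => A *ᵥ f x) (A *ᵥ f') x :=
  ((A.mulVecLin.restrictScalars ℝ).toContinuousLinearMap.hasFDerivAt (x := f x)).comp_hasDerivAt
    x hf

theorem γ1_mulVec (v : Fin 2 → ℂ) : γ1 *ᵥ v = ![v 0, -v 1] := by
  ext i; fin_cases i <;> simp [γ1, mulVec, dotProduct, Fin.sum_univ_two]

theorem γp_mulVec (v : Fin 2 → ℂ) : γp *ᵥ v = ![v 1, 0] := by
  ext i; fin_cases i <;> simp [γp, mulVec, dotProduct, Fin.sum_univ_two]

theorem γm_mulVec (v : Fin 2 → ℂ) : γm *ᵥ v = ![0, v 0] := by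
  ext i; fin_cases i <;> simp [γm, mulVec, dotProduct, Fin.sum_univ_two]

theorem γ1_mul_γ1 : γ1 * γ1 = 1 := by
  ext i j; fin_cases i <;> fin_cases j <;> simp [γ1]

theorem γm_mul_γ1 : γm * γ1 = -(γ1 * γm) := by
  ext i j; fin_cases i <;> fin_cases j <;> simp [γ1, γm]

theorem γp_mul_γ1 : γp * γ1 = -(γ1 * γp) := by
  ext i j; fin_cases i <;> fin_cases j <;> simp [γ1, γp]

theorem hasDerivAt_P1 {ψ : ℝ → Fin 2 → ℂ} {x : ℝ} (hψ : DifferentiableAt ℝ ψ (-x)) :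
    HasDerivAt (P1 ψ) (-(γ1 *ᵥ deriv ψ (-x))) x := by
  have hreflect : HasDerivAt (fun x => ψ (-x)) (-deriv ψ (-x)) x := by
    rw [← deriv_comp_neg]
    exact (differentiableAt_comp_neg.2 hψ).hasDerivAt
  unfold P1
  simpa only [mulVec_neg] using γ1.hasDerivAt_mulVec hreflect

namespace SolvesLL

variable {β E : ℝ} {ψ χ : ℝ → Fin 2 → ℂ}

theorem add (hψ : SolvesLL β E ψ) (hχ : SolvesLL β E χ) : SolvesLL β E (ψ + χ) := by
  refine ⟨hψ.1.add hχ.1, fun x => ?_⟩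
  rw [deriv_add (hψ.1 x) (hχ.1 x)]
  simp only [Pi.add_apply, mulVec_add]
  linear_combination (norm := module) hψ.2 x + hχ.2 x

theorem const_smul (c : ℂ) (hψ : SolvesLL β E ψ) : SolvesLL β E (c • ψ) := by
  refine ⟨hψ.1.const_smul c, fun x => ?_⟩
  rw [deriv_const_smul c (hψ.1 x)]
  simp only [Pi.smul_apply, mulVec_smul]
  linear_combination (norm := module) c • hψ.2 x

theorem P1 (hψ : SolvesLL β E ψ) : SolvesLL β E (P1 ψ) := by
  refine ⟨fun x => (hasDerivAt_P1 (hψ.1 (-x))).differentiableAt, fun x => ?_⟩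
  rw [(hasDerivAt_P1 (hψ.1 (-x))).deriv]
  have h := congrArg (γ1 *ᵥ ·) (hψ.2 (-x))
  simp only [mulVec_sub, mulVec_smul, mulVec_mulVec, γ1_mul_γ1, one_mulVec] at h
  simp only [_root_.P1, mulVec_neg, mulVec_mulVec, γm_mul_γ1, γ1_mul_γ1, γp_mul_γ1, one_mulVec,
    neg_mulVec]
  linear_combination (norm := module) -h

end SolvesLL

theorem solvesLL_of_eigenstate {β E : ℝ} (hβ : β ≠ 0) {k : ℂ} (hk : k ^ 2 = E * β)
    {φ : ℝ → Fin 2 → ℂ} (hφ : Differentiable ℝ φ) (hP : ∀ x, Phat φ x = k • φ x)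
    (hD : ∀ x, Dplus β φ x = k • φ x) : SolvesLL β E φ := by
  refine ⟨hφ, fun x => ?_⟩
  have hderiv : deriv φ x = (Complex.I * k) • φ x := by
    rw [mul_smul, ← hP x, Phat, smul_smul]; simp
  have hlower : (β : ℂ) * φ x 0 = k * φ x 1 := by
    have h := congrFun (hD x) 1
    simp only [Dplus, γp_mulVec, γm_mulVec] at h
    simpa using h
  have hupper : k * φ x 0 = E * φ x 1 :=
    mul_left_cancel₀ (Complex.ofReal_ne_zero.2 hβ) (by linear_combination k * hlower + φ x 1 * hk)
  rw [hderiv]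
  simp only [γ1_mulVec, γp_mulVec, γm_mulVec]
  ext i
  fin_cases i <;> simp only [smul_cons, smul_eq_mul, smul_empty, Pi.smul_apply, Pi.sub_apply,
    Fin.zero_eta, Fin.mk_one, cons_val_zero, cons_val_one, cons_val_fin_one]
  · linear_combination hupper - k * φ x 0 * Complex.I_sq
  · linear_combination hlower + k * φ x 1 * Complex.I_sq

theorem solvesLL_of_simultaneous_eigenstates_general (β : ℝ) (hβ : 0 < β) (E : ℝ) (hE : 0 < E)
    (φ₁ φ₂ : ℝ → (Fin 2 → ℂ))
    (hφ₁ : Differentiable ℝ φ₁)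
    (hφ₂ : Differentiable ℝ φ₂)
    (hP₁ : ∀ x : ℝ, Phat φ₁ x = ((Real.sqrt (E * β) : ℝ) : ℂ) • φ₁ x)
    (hD₁ : ∀ x : ℝ, Dplus β φ₁ x = ((Real.sqrt (E * β) : ℝ) : ℂ) • φ₁ x)
    (hP₂ : ∀ x : ℝ, Phat φ₂ x = ((Real.sqrt (E * β) : ℝ) : ℂ) • φ₂ x)
    (hD₂ : ∀ x : ℝ, Dplus β φ₂ x = ((Real.sqrt (E * β) : ℝ) : ℂ) • φ₂ x)
    (a b : ℂ) :
    SolvesLL β E (fun x => a • φ₁ x + b • γ1.mulVec (φ₂ (-x))) := by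
  have hk : ((Real.sqrt (E * β) : ℝ) : ℂ) ^ 2 = E * β := by
    rw [← Complex.ofReal_pow, Real.sq_sqrt (mul_pos hE hβ).le, Complex.ofReal_mul]
  have h₁ := solvesLL_of_eigenstate hβ.ne' hk hφ₁ hP₁ hD₁
  have h₂ := solvesLL_of_eigenstate hβ.ne' hk hφ₂ hP₂ hD₂
  exact (h₁.const_smul a).add (h₂.P1.const_smul b)

/-- reverse direction.  If `E > 0` and `φ₁, φ₂` are twice-differentiable
simultaneous eigenstates of `P̂` and `D₊` with eigenvalue `√(Eβ)`, then for all
`a, b ∈ ℂ` the function `ψ(x) = a φ₁(x) + b γ¹ φ₂(−x)` solves the free time-independent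
Lévy-Leblond equation with `γ₊`-eigenvalue `E`. -/
theorem solvesLL_of_simultaneous_eigenstates (β : ℝ) (hβ : 0 < β) (E : ℝ) (hE : 0 < E)
    (φ₁ φ₂ : ℝ → (Fin 2 → ℂ))
    (hφ₁ : Differentiable ℝ φ₁) (hφ₁' : Differentiable ℝ (deriv φ₁))
    (hφ₂ : Differentiable ℝ φ₂) (hφ₂' : Differentiable ℝ (deriv φ₂))
    (hP₁ : ∀ x : ℝ, Phat φ₁ x = ((Real.sqrt (E * β) : ℝ) : ℂ) • φ₁ x)
    (hD₁ : ∀ x : ℝ, Dplus β φ₁ x = ((Real.sqrt (E * β) : ℝ) : ℂ) • φ₁ x)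
    (hP₂ : ∀ x : ℝ, Phat φ₂ x = ((Real.sqrt (E * β) : ℝ) : ℂ) • φ₂ x)
    (hD₂ : ∀ x : ℝ, Dplus β φ₂ x = ((Real.sqrt (E * β) : ℝ) : ℂ) • φ₂ x)
    (a b : ℂ) :
    SolvesLL β E (fun x => a • φ₁ x + b • γ1.mulVec (φ₂ (-x))) :=
  solvesLL_of_simultaneous_eigenstates_general β hβ E hE φ₁ φ₂ hφ₁ hφ₂ hP₁ hD₁ hP₂ hD₂ a b

end
end
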